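/- arXiv:1901.08464 — 4 statements merged into one kernel-verified Lean document; each statement's English description precedes it below -/
import Mathlib

section
/- For any two sets 𝒯₀ and 𝒯₁ of complete L-theories, Cl_E(𝒯₀ ∪ 𝒯₁) = Cl_E(𝒯₀) ∪ Cl_E(𝒯₁). -/
open FirstOrder Language Cardinal Set

universe u v w

variable {L : FirstOrder.Language.{u, v}}

/-- A complete theory: a satisfiable set of sentences containing each sentence or its
negation (`Theory.IsMaximal` in Mathlib). -/
abbrev CTheory (L : FirstOrder.Language.{u, v}) : Type max u v :=
  {T : L.Theory // T.IsMaximal}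

/-- The neighbourhood `𝒯_φ = {T ∈ 𝒯 | φ ∈ T}`. -/
def nbhd (𝒯 : Set (CTheory L)) (φ : L.Sentence) : Set (CTheory L) :=
  {T | T ∈ 𝒯 ∧ φ ∈ T.1}

/-- `T` is an accumulation point of `𝒯` if for every sentence `φ ∈ T` the set `𝒯_φ` is
infinite. -/
def IsAccPoint (𝒯 : Set (CTheory L)) (T : CTheory L) : Prop :=
  ∀ φ : L.Sentence, φ ∈ T.1 → (nbhd 𝒯 φ).Infinite

/-- The `E`-closure of `𝒯`: `𝒯` together with all its accumulation points. -/
def ClE (𝒯 : Set (CTheory L)) : Set (CTheory L) :=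
  𝒯 ∪ {T | IsAccPoint 𝒯 T}

/-- The `e`-spectrum of `𝒯`: the cardinality of the set of accumulation points of `𝒯`. -/
noncomputable def eSp (𝒯 : Set (CTheory L)) : Cardinal :=
  Cardinal.mk {T : CTheory L // IsAccPoint 𝒯 T}

/-- Two sentences are inconsistent if `{φ, ψ}` is unsatisfiable. -/
def Inconsistent (φ ψ : L.Sentence) : Prop :=
  ¬ FirstOrder.Language.Theory.IsSatisfiable ({φ, ψ} : L.Theory)

open Classical in
/-- `RSge α 𝒯` says `RS(𝒯) ≥ α`: `RS(𝒯) ≥ 0` iff `𝒯 ≠ ∅`; `RS(𝒯) ≥ 1` iff `𝒯` is infinite;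
for `β ≥ 1`, `RS(𝒯) ≥ β + 1` iff there are pairwise inconsistent sentences `φ_n`, `n ∈ ℕ`,
with `RS(𝒯_{φ_n}) ≥ β` for all `n`; for limit `λ`, `RS(𝒯) ≥ λ` iff `RS(𝒯) ≥ β` for all
`β < λ`. -/
noncomputable def RSge (α : Ordinal.{w}) : Set (CTheory L) → Prop :=
  @Ordinal.limitRecOn (fun _ => Set (CTheory L) → Prop) α
    (fun 𝒯 => 𝒯.Nonempty)
    (fun β ih 𝒯 =>
      if β = 0 then 𝒯.Infinite
      else ∃ φ : ℕ → L.Sentence,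
        (∀ m n : ℕ, m ≠ n → Inconsistent (φ m) (φ n)) ∧ ∀ k : ℕ, ih (nbhd 𝒯 (φ k)))
    (fun β _ ih 𝒯 => ∀ γ : Ordinal, ∀ h : γ < β, ih γ h 𝒯)

/-- `RS(𝒯) = α` for an ordinal `α`: `RS(𝒯) ≥ α` but not `RS(𝒯) ≥ α + 1`. -/
def RSeq (𝒯 : Set (CTheory L)) (α : Ordinal.{w}) : Prop :=
  RSge α 𝒯 ∧ ¬ RSge (α + 1) 𝒯

/-- `RS(𝒯) = ∞`: `RS(𝒯) ≥ α` for every ordinal `α`. -/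
def RSinf (𝒯 : Set (CTheory L)) : Prop :=
  ∀ α : Ordinal.{w}, RSge α 𝒯

/-- `ds(𝒯) = n` (relative to `RS(𝒯) = α`): `n` is the largest natural number for which
there exist `n` pairwise inconsistent sentences `φ_1, …, φ_n` with `RS(𝒯_{φ_i}) = α`. -/
def dsEq (𝒯 : Set (CTheory L)) (α : Ordinal.{w}) (n : ℕ) : Prop :=
  IsGreatest {m : ℕ | ∃ φ : Fin m → L.Sentence,
    (∀ i j : Fin m, i ≠ j → Inconsistent (φ i) (φ j)) ∧
    ∀ i : Fin m, RSeq (nbhd 𝒯 (φ i)) α} n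

/-- `𝒯` is `e`-minimal: for every sentence `φ`, `𝒯_φ` is finite or `𝒯_{¬φ}` is finite. -/
def EMinimal (𝒯 : Set (CTheory L)) : Prop :=
  ∀ φ : L.Sentence, (nbhd 𝒯 φ).Finite ∨ (nbhd 𝒯 φ.not).Finite

/-- `𝒯` is `a`-minimal: `𝒯` has infinitely many accumulation points and for every sentence
`φ`, `𝒯_φ` or `𝒯_{¬φ}` has only finitely many accumulation points. -/
def AMinimal (𝒯 : Set (CTheory L)) : Prop :=
  {T : CTheory L | IsAccPoint 𝒯 T}.Infinite ∧
  ∀ φ : L.Sentence,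
    {T : CTheory L | IsAccPoint (nbhd 𝒯 φ) T}.Finite ∨
    {T : CTheory L | IsAccPoint (nbhd 𝒯 φ.not) T}.Finite

/-- `𝒯` is `α`-minimal: `RS(𝒯) = α` and for every sentence `φ`, `RS(𝒯_φ) < α` or
`RS(𝒯_{¬φ}) < α`. -/
def AlphaMinimal (𝒯 : Set (CTheory L)) (α : Ordinal.{w}) : Prop :=
  RSeq 𝒯 α ∧
  ∀ φ : L.Sentence, ¬ RSge α (nbhd 𝒯 φ) ∨ ¬ RSge α (nbhd 𝒯 φ.not)

theorem FirstOrder.Language.Theory.IsMaximal.inf_mem_iff {T : L.Theory} (hT : T.IsMaximal)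
    (φ ψ : L.Sentence) : φ ⊓ ψ ∈ T ↔ φ ∈ T ∧ ψ ∈ T := by
  simp only [hT.mem_iff_models, Theory.models_sentence_iff, Sentence.realize_inf, forall_and]

theorem nbhd_mono {𝒯 𝒮 : Set (CTheory L)} (h : 𝒯 ⊆ 𝒮) (φ : L.Sentence) :
    nbhd 𝒯 φ ⊆ nbhd 𝒮 φ :=
  fun _ hT => ⟨h hT.1, hT.2⟩

theorem nbhd_union_inf_subset (𝒯₀ 𝒯₁ : Set (CTheory L)) (φ₀ φ₁ : L.Sentence) :
    nbhd (𝒯₀ ∪ 𝒯₁) (φ₀ ⊓ φ₁) ⊆ nbhd 𝒯₀ φ₀ ∪ nbhd 𝒯₁ φ₁ := by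
  rintro S ⟨hS | hS, hSφ⟩
  · exact Or.inl ⟨hS, ((S.2.inf_mem_iff φ₀ φ₁).1 hSφ).1⟩
  · exact Or.inr ⟨hS, ((S.2.inf_mem_iff φ₀ φ₁).1 hSφ).2⟩

theorem IsAccPoint.mono {𝒯 𝒮 : Set (CTheory L)} {T : CTheory L} (h : 𝒯 ⊆ 𝒮)
    (hT : IsAccPoint 𝒯 T) : IsAccPoint 𝒮 T :=
  fun φ hφ => (hT φ hφ).mono (nbhd_mono h φ)

theorem isAccPoint_union {𝒯₀ 𝒯₁ : Set (CTheory L)} {T : CTheory L} :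
    IsAccPoint (𝒯₀ ∪ 𝒯₁) T ↔ IsAccPoint 𝒯₀ T ∨ IsAccPoint 𝒯₁ T := by
  refine ⟨fun hT => ?_, fun hT => hT.elim (·.mono subset_union_left) (·.mono subset_union_right)⟩
  by_contra! hn
  simp only [IsAccPoint, not_forall, Set.not_infinite, exists_prop] at hn
  obtain ⟨⟨φ₀, hφ₀, hfin₀⟩, ⟨φ₁, hφ₁, hfin₁⟩⟩ := hn
  -- `T` is isolated from `𝒯₀ ∪ 𝒯₁` by the conjunction of the sentences isolating it from each part.
  exact hT _ ((T.2.inf_mem_iff φ₀ φ₁).2 ⟨hφ₀, hφ₁⟩)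
    ((hfin₀.union hfin₁).subset (nbhd_union_inf_subset 𝒯₀ 𝒯₁ φ₀ φ₁))

/-- Theorem 1.2: For any two sets `𝒯₀`, `𝒯₁` of complete `L`-theories,
`Cl_E(𝒯₀ ∪ 𝒯₁) = Cl_E(𝒯₀) ∪ Cl_E(𝒯₁)`. -/
theorem clE_union (𝒯₀ 𝒯₁ : Set (CTheory L)) :
    ClE (𝒯₀ ∪ 𝒯₁) = ClE 𝒯₀ ∪ ClE 𝒯₁ := by
  ext T
  simp only [ClE, mem_union, mem_ofPred_eq, isAccPoint_union]
  tauto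
end

section
/- If 𝒯 is an E-closed family of complete L-theories and e-Sp(𝒯) = n for some natural number n with 0 < n < ℵ₀, then 𝒯 can be represented as a disjoint union of n subfamilies 𝒯₁, …, 𝒯ₙ, each of which is e-categorical (has exactly one accumulation point). -/
open FirstOrder Language Cardinal Set

universe u v w

variable {L : FirstOrder.Language.{u, v}}

/-! The complete theories form a Stone space whose clopen sets are the sets
`[φ] = definableSet φ` of theories containing a sentence `φ`, and the accumulation points of
`𝒯 ∩ [φ]` are exactly the accumulation points of `𝒯` lying in `[φ]`. The `n` accumulation
points of `𝒯` are separated by a partition of the space into `n` clopen sets, and `𝒯` is cut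
along that partition. -/

namespace BooleanSubalgebra

open Function

variable {X ι : Type*} (B : BooleanSubalgebra (Set X))

lemma exists_isolating_family [Finite ι] {t : ι → X} (ht : Injective t)
    (hsep : ∀ x y, x ≠ y → ∃ s ∈ B, x ∈ s ∧ y ∉ s) :
    ∃ D : ι → Set X, (∀ i, D i ∈ B) ∧ ∀ i j, t j ∈ D i ↔ j = i := by
  choose s hsB hs using hsep
  refine ⟨fun i => ⋂ (j) (hji : j ≠ i), s (t i) (t j) (ht.ne hji.symm),
    fun i => B.iInf_mem fun j => B.iInf_mem fun hji => hsB _ _ _, fun i j => ?_⟩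
  simp only [Set.mem_iInter]
  refine ⟨fun h => by_contra fun hji => (hs _ _ (ht.ne (Ne.symm hji))).2 (h j hji), ?_⟩
  rintro rfl k hkj
  exact (hs _ _ _).1

lemma exists_partition_separating [LinearOrder ι] [LocallyFiniteOrderBot ι] [Finite ι]
    [Nonempty ι] {t : ι → X} (ht : Injective t)
    (hsep : ∀ x y, x ≠ y → ∃ s ∈ B, x ∈ s ∧ y ∉ s) :
    ∃ P : ι → Set X, (∀ i, P i ∈ B) ∧ Pairwise (Disjoint on P) ∧ ⋃ i, P i = Set.univ ∧
      ∀ i j, t j ∈ P i ↔ j = i := by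
  obtain ⟨D, hDB, hD⟩ := B.exists_isolating_family ht hsep
  -- the points lying in no `D i` are put into the first block
  set D' : ι → Set X := fun i => D i ∪ (⋃ j, D j)ᶜ
  have hD'B : ∀ i, D' i ∈ B := fun i => B.sup_mem (hDB i) (B.compl_mem (B.iSup_mem hDB))
  have hD' : ∀ i j, t j ∈ D' i ↔ j = i := fun i j => by simp [D', hD]
  have hmem : ∀ i, t i ∈ disjointed D' i := fun i => by
    rw [disjointed_eq_inter_compl]
    simp only [Set.mem_inter_iff, Set.mem_iInter, Set.mem_compl_iff, hD']
    exact ⟨trivial, fun j hji => hji.ne'⟩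
  refine ⟨disjointed D', fun i => disjointedRec (fun _ j hs => B.sdiff_mem hs (hD'B j)) (hD'B i),
    disjoint_disjointed D', ?_, fun i j => ⟨fun h => ?_, by rintro rfl; exact hmem j⟩⟩
  · rw [iUnion_disjointed, ← Set.iUnion_union, Set.union_compl_self]
  · exact (disjoint_disjointed D').eq (Set.not_disjoint_iff.2 ⟨t j, hmem j, h⟩)

end BooleanSubalgebra

namespace CTheory

def definableSet (φ : L.Sentence) : Set (CTheory L) :=
  {T | φ ∈ T.1}

lemma mem_definableSet_iff_realize {φ : L.Sentence} (T : CTheory L) :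
    T ∈ definableSet φ ↔ T.2.1.some ⊨ φ := by
  rw [definableSet, Set.mem_ofPred_eq, T.2.mem_iff_models,
    T.2.isComplete.realize_sentence_iff φ T.2.1.some]

lemma definableSet_inf (φ ψ : L.Sentence) :
    definableSet (φ ⊓ ψ) = definableSet φ ∩ definableSet ψ := by
  ext T
  simp only [Set.mem_inter_iff, mem_definableSet_iff_realize, Sentence.realize_inf]

lemma definableSet_sup (φ ψ : L.Sentence) :
    definableSet (φ ⊔ ψ) = definableSet φ ∪ definableSet ψ := by
  ext T
  simp only [Set.mem_union, mem_definableSet_iff_realize, Sentence.realize_sup]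

lemma definableSet_not (φ : L.Sentence) : definableSet φ.not = (definableSet φ)ᶜ := by
  ext T
  simp only [Set.mem_compl_iff, mem_definableSet_iff_realize, Sentence.realize_not]

lemma definableSet_bot : definableSet (⊥ : L.Sentence) = ∅ := by
  ext T
  simp [mem_definableSet_iff_realize, Sentence.Realize]

def definableSets : BooleanSubalgebra (Set (CTheory L)) where
  carrier := Set.range definableSet
  supClosed' := by
    rintro _ ⟨φ, rfl⟩ _ ⟨ψ, rfl⟩
    exact ⟨φ ⊔ ψ, definableSet_sup φ ψ⟩
  infClosed' := by
    rintro _ ⟨φ, rfl⟩ _ ⟨ψ, rfl⟩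
    exact ⟨φ ⊓ ψ, definableSet_inf φ ψ⟩
  compl_mem' := by
    rintro _ ⟨φ, rfl⟩
    exact ⟨φ.not, definableSet_not φ⟩
  bot_mem' := ⟨⊥, definableSet_bot⟩

lemma definableSet_mem_definableSets (φ : L.Sentence) : definableSet φ ∈ definableSets :=
  ⟨φ, rfl⟩

lemma exists_mem_definableSets_separating {T T' : CTheory L} (h : T ≠ T') :
    ∃ s ∈ definableSets, T ∈ s ∧ T' ∉ s := by
  by_contra! H
  refine h (Subtype.ext (Set.ext fun φ => ⟨H _ (definableSet_mem_definableSets φ), ?_⟩))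
  intro hφ
  by_contra hφT
  exact H _ (definableSets.compl_mem (definableSet_mem_definableSets φ)) hφT hφ

end CTheory

open CTheory

lemma isAccPoint_iff {𝒯 : Set (CTheory L)} {T : CTheory L} :
    IsAccPoint 𝒯 T ↔ ∀ s ∈ definableSets, T ∈ s → (𝒯 ∩ s).Infinite := by
  refine ⟨?_, fun h φ hφ => h _ (definableSet_mem_definableSets φ) hφ⟩
  rintro h _ ⟨φ, rfl⟩ hφ
  exact h φ hφ

lemma isAccPoint_inter_iff {𝒯 s : Set (CTheory L)} (hs : s ∈ definableSets) {T : CTheory L} :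
    IsAccPoint (𝒯 ∩ s) T ↔ IsAccPoint 𝒯 T ∧ T ∈ s := by
  simp only [isAccPoint_iff]
  refine ⟨fun h => ⟨fun u hu hTu => (h u hu hTu).mono ?_, ?_⟩, ?_⟩
  · exact Set.inter_subset_inter_left u Set.inter_subset_left
  · by_contra hTs
    refine h _ (definableSets.compl_mem hs) hTs ?_
    rw [Set.inter_assoc, Set.inter_compl_self, Set.inter_empty]
    exact Set.finite_empty
  · rintro ⟨h, hTs⟩ u hu hTu
    rw [Set.inter_assoc]
    exact h _ (definableSets.inf_mem hs hu) ⟨hTs, hTu⟩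

lemma eSp_inter_eq_one {𝒯 s : Set (CTheory L)} (hs : s ∈ definableSets)
    (h : ∃! T, IsAccPoint 𝒯 T ∧ T ∈ s) : eSp (𝒯 ∩ s) = 1 := by
  simp only [eSp, isAccPoint_inter_iff hs]
  have := ((unique_subtype_iff_existsUnique _).2 h).some
  exact Cardinal.mk_eq_one _

theorem eCategorical_partition_general (𝒯 : Set (CTheory L))
    (n : ℕ) (hn : 0 < n) (hsp : eSp 𝒯 = n) :
    ∃ 𝒮 : Fin n → Set (CTheory L),
      (∀ i j : Fin n, i ≠ j → Disjoint (𝒮 i) (𝒮 j)) ∧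
      (⋃ i : Fin n, 𝒮 i) = 𝒯 ∧
      ∀ i : Fin n, eSp (𝒮 i) = 1 := by
  obtain ⟨e⟩ := Cardinal.mk_eq_nat_iff.1 hsp
  have : Nonempty (Fin n) := ⟨⟨0, hn⟩⟩
  obtain ⟨P, hPB, hPdisj, hPcover, hmemP⟩ := definableSets.exists_partition_separating
    (Subtype.val_injective.comp e.symm.injective) fun _ _ => exists_mem_definableSets_separating
  refine ⟨fun i => 𝒯 ∩ P i, fun i j hij => (hPdisj hij).mono inter_subset_right inter_subset_right,
    by rw [← inter_iUnion, hPcover, inter_univ],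
    fun i => eSp_inter_eq_one (hPB i) ⟨_, ⟨(e.symm i).2, (hmemP i i).2 rfl⟩, ?_⟩⟩
  rintro T ⟨hT, hTP⟩
  obtain ⟨j, rfl⟩ : ∃ j, (e.symm j).1 = T := ⟨e ⟨T, hT⟩, by simp⟩
  rw [(hmemP i j).1 hTP]

/-- Proposition 1.5: any `E`-closed family `𝒯` with finite
`e`-Sp(𝒯) = n > 0 is a disjoint union of `n` `e`-categorical families. -/
theorem eCategorical_partition (𝒯 : Set (CTheory L)) (hclosed : ClE 𝒯 = 𝒯)
    (n : ℕ) (hn : 0 < n) (hsp : eSp 𝒯 = n) :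
    ∃ 𝒮 : Fin n → Set (CTheory L),
      (∀ i j : Fin n, i ≠ j → Disjoint (𝒮 i) (𝒮 j)) ∧
      (⋃ i : Fin n, 𝒮 i) = 𝒯 ∧
      ∀ i : Fin n, eSp (𝒮 i) = 1 :=
  eCategorical_partition_general 𝒯 n hn hsp
end

section
/- If the language L has at most countably many sentences, then for every family 𝒯 of complete L-theories either RS(𝒯) = ∞ or RS(𝒯) is a countable ordinal (RS(𝒯) < ω₁); that is, every e-totally transcendental family in an at most countable language has at most countable rank. -/
open FirstOrder Language Cardinal Set

universe u v w

variable {L : FirstOrder.Language.{u, v}}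

/-!
If `RS(𝒯) ≥ ω₁`, then, since there are only countably many sentences, the neighbourhoods `𝒯_φ`
of rank below `ω₁` have their ranks bounded by one countable ordinal `θ`. Then `RS(𝒯) ≥ θ + 2`
yields pairwise inconsistent `φ_n` with `RS(𝒯_{φ_n}) ≥ θ + 1`, hence `RS(𝒯_{φ_n}) ≥ ω₁`; so
`RS ≥ ω₁` reproduces itself along inconsistent splittings and `RS(𝒯) = ∞` follows by induction.
Otherwise `RS(𝒯) ≥ α` fails for some `α < ω₁`; for nonempty `𝒯` the least such `α` is a
successor `β + 1` (the rank is continuous at limits), so `RS(𝒯) = β` is countable.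
-/

open Ordinal

namespace RSge

theorem zero_iff (𝒯 : Set (CTheory L)) : RSge (0 : Ordinal.{w}) 𝒯 ↔ 𝒯.Nonempty := by
  simp only [RSge, limitRecOn_zero]

theorem one_iff (𝒯 : Set (CTheory L)) : RSge (1 : Ordinal.{w}) 𝒯 ↔ 𝒯.Infinite := by
  rw [RSge, ← zero_add 1, limitRecOn_add_one, if_pos rfl]

theorem add_one_iff {β : Ordinal.{w}} (hβ : β ≠ 0) (𝒯 : Set (CTheory L)) :
    RSge (β + 1) 𝒯 ↔ ∃ φ : ℕ → L.Sentence,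
      (∀ m n : ℕ, m ≠ n → Inconsistent (φ m) (φ n)) ∧ ∀ k : ℕ, RSge β (nbhd 𝒯 (φ k)) := by
  rw [RSge, limitRecOn_add_one, if_neg hβ]
  rfl

theorem limit_iff {β : Ordinal.{w}} (hβ : Order.IsSuccLimit β) (𝒯 : Set (CTheory L)) :
    RSge β 𝒯 ↔ ∀ γ < β, RSge γ 𝒯 := by
  rw [RSge, limitRecOn_limit _ _ _ _ hβ]
  rfl

theorem mono {α : Ordinal.{w}} {𝒳 𝒴 : Set (CTheory L)} (hsub : 𝒳 ⊆ 𝒴) (h : RSge α 𝒳) :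
    RSge α 𝒴 := by
  induction α using limitRecOn generalizing 𝒳 𝒴 with
  | zero => exact (zero_iff 𝒴).2 (((zero_iff 𝒳).1 h).mono hsub)
  | add_one β ih =>
    rcases eq_or_ne β 0 with rfl | hβ
    · rw [zero_add, one_iff] at h ⊢
      exact h.mono hsub
    · obtain ⟨φ, hinc, hφ⟩ := (add_one_iff hβ 𝒳).1 h
      exact (add_one_iff hβ 𝒴).2
        ⟨φ, hinc, fun k => ih (fun T hT => ⟨hsub hT.1, hT.2⟩) (hφ k)⟩
  | limit β hβ ih =>
    exact (limit_iff hβ 𝒴).2 fun γ hγ => ih γ hγ hsub ((limit_iff hβ 𝒳).1 h γ hγ)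

theorem of_add_one {β : Ordinal.{w}} {𝒯 : Set (CTheory L)} (h : RSge (β + 1) 𝒯) :
    RSge β 𝒯 := by
  rcases eq_or_ne β 0 with rfl | hβ
  · rw [zero_add, one_iff] at h
    exact (zero_iff 𝒯).2 h.nonempty
  · obtain ⟨φ, -, hφ⟩ := (add_one_iff hβ 𝒯).1 h
    exact mono (fun T hT => hT.1) (hφ 0)

theorem anti {α β : Ordinal.{w}} {𝒯 : Set (CTheory L)} (hαβ : α ≤ β) (h : RSge β 𝒯) :
    RSge α 𝒯 := by
  induction β using limitRecOn generalizing α with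
  | zero => rwa [nonpos_iff_eq_zero.1 hαβ]
  | add_one β ih =>
    rcases hαβ.eq_or_lt with rfl | hlt
    · exact h
    · exact ih (Order.lt_add_one_iff.1 hlt) (of_add_one h)
  | limit β hβ ih =>
    rcases hαβ.eq_or_lt with rfl | hlt
    · exact h
    · exact (limit_iff hβ 𝒯).1 h α hlt

theorem exists_uniform_lt_omega_one {ι : Type*} [Countable ι] (𝒮 : ι → Set (CTheory L)) :
    ∃ θ < (ω₁ : Ordinal.{w}), ∀ i, RSge θ (𝒮 i) → RSge (ω₁ : Ordinal.{w}) (𝒮 i) := by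
  have bound : ∀ i, ∃ γ < (ω₁ : Ordinal.{w}), RSge γ (𝒮 i) → RSge (ω₁ : Ordinal.{w}) (𝒮 i) := by
    intro i
    by_cases h : RSge (ω₁ : Ordinal.{w}) (𝒮 i)
    · exact ⟨0, omega_pos 1, fun _ => h⟩
    · obtain ⟨γ, hγ, hnot⟩ : ∃ γ < (ω₁ : Ordinal.{w}), ¬ RSge γ (𝒮 i) := by
        simpa [limit_iff (isSuccLimit_omega 1)] using h
      exact ⟨γ, hγ, fun h' => (hnot h').elim⟩
  choose γ hγ hγ𝒮 using bound
  exact ⟨⨆ i, γ i, iSup_lt_omega_one hγ,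
    fun i h => hγ𝒮 i (anti (Ordinal.le_iSup γ i) h)⟩

theorem exists_inconsistent_of_omega_one (hL : Cardinal.mk L.Sentence ≤ Cardinal.aleph0)
    {𝒯 : Set (CTheory L)} (h : RSge (ω₁ : Ordinal.{w}) 𝒯) :
    ∃ φ : ℕ → L.Sentence, (∀ m n : ℕ, m ≠ n → Inconsistent (φ m) (φ n)) ∧
      ∀ k, RSge (ω₁ : Ordinal.{w}) (nbhd 𝒯 (φ k)) := by
  have : Countable L.Sentence := Cardinal.mk_le_aleph0_iff.1 hL
  obtain ⟨θ, hθ, hθ𝒯⟩ := exists_uniform_lt_omega_one (nbhd 𝒯)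
  have hω₁ := isSuccLimit_omega 1
  have hθ₂ : θ + 1 + 1 < ω₁ := hω₁.add_one_lt (hω₁.add_one_lt hθ)
  obtain ⟨φ, hinc, hφ⟩ := (add_one_iff (lt_add_one θ).ne_bot 𝒯).1 (anti hθ₂.le h)
  exact ⟨φ, hinc, fun k => hθ𝒯 _ (of_add_one (hφ k))⟩

theorem of_omega_one (hL : Cardinal.mk L.Sentence ≤ Cardinal.aleph0)
    {𝒯 : Set (CTheory L)} (h : RSge (ω₁ : Ordinal.{w}) 𝒯) (α : Ordinal.{w}) : RSge α 𝒯 := by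
  induction α using limitRecOn generalizing 𝒯 with
  | zero => exact anti (omega_pos 1).le h
  | add_one β ih =>
    rcases eq_or_ne β 0 with rfl | hβ
    · exact anti (by simpa using (one_lt_omega0.trans omega0_lt_omega_one).le) h
    · obtain ⟨φ, hinc, hφ⟩ := exists_inconsistent_of_omega_one hL h
      exact (add_one_iff hβ 𝒯).2 ⟨φ, hinc, fun k => ih (hφ k)⟩
  | limit β hβ ih => exact (limit_iff hβ 𝒯).2 fun γ hγ => ih γ hγ h

end RSge

theorem exists_RSeq_of_not_RSge {α : Ordinal.{w}} {𝒯 : Set (CTheory L)} (hne : 𝒯.Nonempty)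
    (h : ¬ RSge α 𝒯) : ∃ β < α, RSeq 𝒯 β := by
  induction α using limitRecOn with
  | zero => exact absurd ((RSge.zero_iff 𝒯).2 hne) h
  | add_one β ih =>
    by_cases hβ : RSge β 𝒯
    · exact ⟨β, lt_add_one β, hβ, h⟩
    · obtain ⟨γ, hγ, hRS⟩ := ih hβ
      exact ⟨γ, hγ.trans (lt_add_one β), hRS⟩
  | limit β hβ ih =>
    obtain ⟨γ, hγ, hnot⟩ : ∃ γ < β, ¬ RSge γ 𝒯 := by simpa [RSge.limit_iff hβ] using h
    obtain ⟨δ, hδ, hRS⟩ := ih γ hγ hnot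
    exact ⟨δ, hδ.trans hγ, hRS⟩

/-- Proposition 2.2: if the language has at most countably many sentences,
then for every family `𝒯` either `RS(𝒯) = ∞`, or `𝒯 = ∅` (`RS(𝒯) = -1`), or `RS(𝒯)` is a
countable ordinal. -/
theorem rank_countable_of_countable_language (𝒯 : Set (CTheory L))
    (hL : Cardinal.mk L.Sentence ≤ Cardinal.aleph0) :
    (∀ α : Ordinal.{w}, RSge α 𝒯) ∨ 𝒯 = ∅ ∨ ∃ α : Ordinal.{w}, α.card ≤ Cardinal.aleph0 ∧ RSeq 𝒯 α := by
  by_cases hω₁ : RSge (ω₁ : Ordinal.{w}) 𝒯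
  · exact Or.inl (RSge.of_omega_one hL hω₁)
  rcases 𝒯.eq_empty_or_nonempty with h𝒯 | hne
  · exact Or.inr (Or.inl h𝒯)
  obtain ⟨α, hα, hRS⟩ := exists_RSeq_of_not_RSge hne hω₁
  exact Or.inr (Or.inr ⟨α, Cardinal.lt_aleph_one_iff.1 (lt_omega_iff_card_lt.1 hα), hRS⟩)
end

section
/- If a family 𝒯 of complete L-theories satisfies RS(𝒯) ≥ 2, then e-Sp(𝒯) ≥ ℵ₀, i.e., 𝒯 has infinitely many accumulation points. -/
open FirstOrder Language Cardinal Set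

universe u v w

variable {L : FirstOrder.Language.{u, v}}

/-!
Two pairwise inconsistent sentences `φ m`, `φ n` never lie in one complete theory, so it
suffices to find, for each `n`, an accumulation point of `𝒯` containing `φ n`. Since
`𝒯_{φ n}` is infinite, it lies in a non-principal ultrafilter `U`; the sentences `ψ` with
`{T | ψ ∈ T} ∈ U` form a complete theory (satisfiable by compactness), and each of its
neighbourhoods in `𝒯` belongs to `U`, hence is infinite.
-/

open Filter

lemma RSge_one_iff (𝒯 : Set (CTheory L)) : RSge.{u, v, w} 1 𝒯 ↔ 𝒯.Infinite := by
  rw [RSge, ← zero_add (1 : Ordinal), Ordinal.limitRecOn_add_one, if_pos rfl]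

lemma RSge_two_iff (𝒯 : Set (CTheory L)) :
    RSge.{u, v, w} 2 𝒯 ↔ ∃ φ : ℕ → L.Sentence,
      (∀ m n : ℕ, m ≠ n → Inconsistent (φ m) (φ n)) ∧
      ∀ k : ℕ, (nbhd 𝒯 (φ k)).Infinite := by
  rw [RSge, ← one_add_one_eq_two, Ordinal.limitRecOn_add_one, if_neg one_ne_zero]
  exact exists_congr fun φ => and_congr_right fun _ => forall_congr' fun k =>
    RSge_one_iff.{u, v, w} (nbhd 𝒯 (φ k))

lemma Inconsistent.notMem_of_mem {φ ψ : L.Sentence} (h : Inconsistent φ ψ) {T : L.Theory}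
    (hT : T.IsSatisfiable) (hφ : φ ∈ T) : ψ ∉ T := fun hψ =>
  h (hT.mono (insert_subset hφ (singleton_subset_iff.2 hψ)))

def ultralimTheory (U : Ultrafilter (CTheory L)) : L.Theory :=
  {ψ | {T : CTheory L | ψ ∈ T.1} ∈ U}

lemma isMaximal_ultralimTheory (U : Ultrafilter (CTheory L)) : (ultralimTheory U).IsMaximal := by
  refine ⟨?_, fun ψ => ?_⟩
  · rw [Theory.isSatisfiable_iff_isFinitelySatisfiable]
    intro T₀ hT₀
    have hmem : (⋂ ψ ∈ (T₀ : Set L.Sentence), {T : CTheory L | ψ ∈ T.1}) ∈ U :=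
      (biInter_mem T₀.finite_toSet).2 fun ψ hψ => hT₀ hψ
    obtain ⟨T, hT⟩ := Filter.nonempty_of_mem hmem
    exact T.2.1.mono fun ψ hψ => mem_iInter₂.1 hT ψ hψ
  · refine (U.mem_or_compl_mem {T : CTheory L | ψ ∈ T.1}).imp id fun hψ => ?_
    exact mem_of_superset hψ fun T hT => (T.2.2 ψ).resolve_left hT

lemma isAccPoint_ultralimTheory {𝒯 : Set (CTheory L)} {U : Ultrafilter (CTheory L)}
    (hU : (U : Filter (CTheory L)) ≤ cofinite) (h𝒯 : 𝒯 ∈ U) :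
    IsAccPoint 𝒯 ⟨ultralimTheory U, isMaximal_ultralimTheory U⟩ := fun _ hψ =>
  frequently_cofinite_mem_iff_infinite.1
    ((Eventually.frequently (p := (· ∈ nbhd 𝒯 _)) (inter_mem h𝒯 hψ)).filter_mono hU)

lemma exists_isAccPoint_mem_of_infinite {𝒯 : Set (CTheory L)} {φ : L.Sentence}
    (hφ : (nbhd 𝒯 φ).Infinite) : ∃ T : CTheory L, IsAccPoint 𝒯 T ∧ φ ∈ T.1 := by
  have := hφ.cofinite_inf_principal_neBot
  obtain ⟨U, hU⟩ := Ultrafilter.exists_le (cofinite ⊓ 𝓟 (nbhd 𝒯 φ))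
  have hnbhd : nbhd 𝒯 φ ∈ U := hU (mem_inf_of_right (mem_principal_self _))
  exact ⟨_, isAccPoint_ultralimTheory (hU.trans inf_le_left)
    (mem_of_superset hnbhd fun _ h => h.1), mem_of_superset hnbhd fun _ h => h.2⟩

/-- Proposition 2.6: if `RS(𝒯) ≥ 2` then `e`-Sp(𝒯) ≥ ℵ₀. -/
theorem eSp_infinite_of_rank_ge_two (𝒯 : Set (CTheory L)) (h : RSge 2 𝒯) :
    Cardinal.aleph0 ≤ eSp 𝒯 := by
  obtain ⟨φ, hinc, hinf⟩ := (RSge_two_iff 𝒯).1 h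
  choose T hacc hmem using fun n => exists_isAccPoint_mem_of_infinite (hinf n)
  have hinj : Function.Injective T := fun m n hmn => by_contra fun hne =>
    (hinc m n hne).notMem_of_mem (T m).2.1 (hmem m) (hmn ▸ hmem n)
  exact Cardinal.infinite_iff.1 <| Infinite.of_injective
    (fun n => (⟨T n, hacc n⟩ : {T // IsAccPoint 𝒯 T})) fun m n h => hinj (congrArg Subtype.val h)
end
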